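/- arXiv:2104.12112 — 2 statements merged into one kernel-verified Lean document; each statement's English description precedes it below -/
import Mathlib

section
/- Let T : H → H be a nonexpansive map on a Hilbert space with a fixed point z⋆, let θ ∈ (0,1), and define the damped iteration z_{k+1} = (1-θ)z_k + θ T(z_k). Then for every k ≥ 0, ‖z_{k+1} - z_k‖² ≤ (θ / ((k+1)(1-θ))) ‖z_0 - z⋆‖². -/
lemma km_convex_norm_sq {H : Type*} [NormedAddCommGroup H] [InnerProductSpace ℝ H]
    (θ : ℝ) (a b : H) :
    ‖(1 - θ) • a + θ • b‖ ^ 2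
      = (1 - θ) * ‖a‖ ^ 2 + θ * ‖b‖ ^ 2 - θ * (1 - θ) * ‖a - b‖ ^ 2 := by
  have h1 := @norm_add_sq_real H _ _ ((1 - θ) • a) (θ • b)
  have h2 := @norm_sub_sq_real H _ _ a b
  simp only [norm_smul, real_inner_smul_left, real_inner_smul_right, mul_pow, sq_abs,
    Real.norm_eq_abs] at h1
  linear_combination h1 + θ * (1 - θ) * h2

theorem km_successive_difference_rate
    {H : Type*} [NormedAddCommGroup H] [InnerProductSpace ℝ H]
    (T : H → H) (hT : ∀ u v, ‖T u - T v‖ ≤ ‖u - v‖)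
    (zstar : H) (hfix : T zstar = zstar)
    (θ : ℝ) (hθ : θ ∈ Set.Ioo (0 : ℝ) 1)
    (z : ℕ → H) (hz : ∀ k, z (k + 1) = (1 - θ) • z k + θ • T (z k)) :
    ∀ k : ℕ, ‖z (k + 1) - z k‖ ^ 2
      ≤ (θ / (((k : ℝ) + 1) * (1 - θ))) * ‖z 0 - zstar‖ ^ 2 := by
  obtain ⟨hθ0, hθ1⟩ := hθ
  have h1θ : (0:ℝ) < 1 - θ := by linarith
  set d : ℕ → ℝ := fun k => ‖z (k + 1) - z k‖ ^ 2 with hd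
  set e : ℕ → ℝ := fun k => ‖z k - zstar‖ ^ 2 with he
  -- step: difference is θ • (T z k - z k)
  have hstep : ∀ k, z (k + 1) - z k = θ • (T (z k) - z k) := by
    intro k
    rw [hz k]
    rw [sub_smul, one_smul, smul_sub]
    abel
  -- Lemma A
  have hA : ∀ k, ((1 - θ) / θ) * d k ≤ e k - e (k + 1) := by
    intro k
    have hkey : e (k + 1) ≤ e k - θ * (1 - θ) * ‖T (z k) - z k‖ ^ 2 := by
      have heq : z (k + 1) - zstar = (1 - θ) • (z k - zstar) + θ • (T (z k) - zstar) := by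
        rw [hz k]; module
      have hid := km_convex_norm_sq θ (z k - zstar) (T (z k) - zstar)
      have hsub : (z k - zstar) - (T (z k) - zstar) = -(T (z k) - z k) := by abel
      rw [hsub, norm_neg] at hid
      have hT' : ‖T (z k) - zstar‖ ≤ ‖z k - zstar‖ := by
        have := hT (z k) zstar; rwa [hfix] at this
      have hT2 : ‖T (z k) - zstar‖ ^ 2 ≤ ‖z k - zstar‖ ^ 2 := by
        exact pow_le_pow_left₀ (norm_nonneg _) hT' 2
      simp only [he, heq]
      rw [hid]
      nlinarith
    have hdval : d k = θ ^ 2 * ‖T (z k) - z k‖ ^ 2 := by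
      simp only [hd, hstep k, norm_smul, Real.norm_eq_abs, mul_pow, sq_abs]
    rw [hdval]
    have : ((1 - θ) / θ) * (θ ^ 2 * ‖T (z k) - z k‖ ^ 2)
        = θ * (1 - θ) * ‖T (z k) - z k‖ ^ 2 := by
      field_simp
    rw [this]
    linarith
  -- Lemma B : d nonincreasing
  have hB : ∀ k, d (k + 1) ≤ d k := by
    intro k
    have heq : z (k + 2) - z (k + 1)
        = (1 - θ) • (z (k + 1) - z k) + θ • (T (z (k + 1)) - T (z k)) := by
      rw [hz (k + 1), hz k]; module
    have hn : ‖z (k + 2) - z (k + 1)‖ ≤ ‖z (k + 1) - z k‖ := by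
      rw [heq]
      calc ‖(1 - θ) • (z (k + 1) - z k) + θ • (T (z (k + 1)) - T (z k))‖
          ≤ ‖(1 - θ) • (z (k + 1) - z k)‖ + ‖θ • (T (z (k + 1)) - T (z k))‖ :=
            norm_add_le _ _
        _ = (1 - θ) * ‖z (k + 1) - z k‖ + θ * ‖T (z (k + 1)) - T (z k)‖ := by
            rw [norm_smul, norm_smul, Real.norm_eq_abs, Real.norm_eq_abs,
              abs_of_pos h1θ, abs_of_pos hθ0]
        _ ≤ (1 - θ) * ‖z (k + 1) - z k‖ + θ * ‖z (k + 1) - z k‖ := by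
            have := hT (z (k + 1)) (z k)
            nlinarith
        _ = ‖z (k + 1) - z k‖ := by ring
    exact pow_le_pow_left₀ (norm_nonneg _) hn 2
  -- main induction
  have hmain : ∀ k : ℕ, ((k : ℝ) + 1) * ((1 - θ) / θ) * d k + e (k + 1) ≤ e 0 := by
    intro k
    induction k with
    | zero =>
      have := hA 0
      push_cast
      linarith
    | succ n ih =>
      have hAn := hA (n + 1)
      have hBn := hB n
      have hc : (0:ℝ) ≤ (1 - θ) / θ := le_of_lt (div_pos h1θ hθ0)
      have hmono : ((n : ℝ) + 1) * ((1 - θ) / θ) * d (n + 1)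
          ≤ ((n : ℝ) + 1) * ((1 - θ) / θ) * d n := by
        apply mul_le_mul_of_nonneg_left hBn
        positivity
      push_cast
      nlinarith
  intro k
  have h := hmain k
  have he1 : (0:ℝ) ≤ e (k + 1) := by positivity
  have hk1 : (0:ℝ) < (k : ℝ) + 1 := by positivity
  have hden : (0:ℝ) < ((k : ℝ) + 1) * (1 - θ) := by positivity
  rw [div_mul_eq_mul_div, le_div_iff₀ hden]
  have : ((k : ℝ) + 1) * ((1 - θ) / θ) * d k ≤ e 0 := by linarith
  have h2 : ((k : ℝ) + 1) * (1 - θ) * d k ≤ θ * e 0 := by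
    have := mul_le_mul_of_nonneg_left this (le_of_lt hθ0)
    calc ((k : ℝ) + 1) * (1 - θ) * d k = θ * (((k : ℝ) + 1) * ((1 - θ) / θ) * d k) := by
          field_simp
      _ ≤ θ * e 0 := this
  simpa [hd, he, mul_comm] using h2
end

section
/- Let τ be a uniformly random permutation of {1,...,n}, e_i the standard basis vectors of ℝ^n, m_i = 𝟙 - ne_i, and M_i = I + (1/n)m_i e_iᵀ. Then 𝔼_τ[M_{τ(1)} M_{τ(2)} ⋯ M_{τ(n)} 𝟙] = 𝟙. -/
/-!
Since `𝟙ᵀ mᵢ = 0`, every `Mᵢ` fixes the row vector `𝟙ᵀ`, so `w = M₁ ⋯ Mₙ 𝟙` has coordinate sum `n`.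
Relabelling the indices by `τ` conjugates each `Mᵢ` by the permutation matrix of `τ`, which fixes
`𝟙`; hence the product for `τ` sends `𝟙` to `w` with its coordinates permuted by `τ`. Averaged over
all permutations, every coordinate of a permuted vector becomes the mean of `w`, namely `1`.
-/

open Matrix Finset Equiv

section PermutationAverage

variable {α M : Type*} [Fintype α] [DecidableEq α] [AddCommMonoid M]

theorem Equiv.Perm.sum_apply_eq_sum_apply (w : α → M) (i j : α) :
    ∑ σ : Perm α, w (σ i) = ∑ σ : Perm α, w (σ j) :=
  Fintype.sum_equiv (Equiv.mulRight (swap i j)) _ _ fun σ => by simp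

theorem Equiv.Perm.card_smul_sum_apply (w : α → M) (i : α) :
    Fintype.card α • ∑ σ : Perm α, w (σ i) = (Fintype.card α).factorial • ∑ a, w a :=
  calc Fintype.card α • ∑ σ : Perm α, w (σ i) = ∑ j, ∑ σ : Perm α, w (σ j) := by
        simp [Perm.sum_apply_eq_sum_apply w _ i]
    _ = ∑ σ : Perm α, ∑ a, w (σ a) := Finset.sum_comm
    _ = ∑ _σ : Perm α, ∑ a, w a := by simp only [Equiv.sum_comp]
    _ = (Fintype.card α).factorial • ∑ a, w a := by simp [Fintype.card_perm]

theorem Equiv.Perm.factorial_inv_mul_sum_apply {K : Type*} [Field K] [CharZero K] (w : α → K)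
    (i : α) :
    ((Fintype.card α).factorial : K)⁻¹ * ∑ σ : Perm α, w (σ i) =
      (Fintype.card α : K)⁻¹ * ∑ a, w a := by
  have hcard : (Fintype.card α : K) ≠ 0 :=
    Nat.cast_ne_zero.mpr (Fintype.card_pos_iff.mpr ⟨i⟩).ne'
  have hfact : ((Fintype.card α).factorial : K) ≠ 0 :=
    Nat.cast_ne_zero.mpr (Nat.factorial_ne_zero _)
  have h := Perm.card_smul_sum_apply w i
  rw [nsmul_eq_mul, nsmul_eq_mul] at h
  field_simp
  linear_combination h

end PermutationAverage

namespace Matrix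

variable {α R : Type*} [Fintype α]

theorem sum_mulVec_of_one_vecMul [Semiring R] {A : Matrix α α R} (h : 1 ᵥ* A = 1)
    (v : α → R) : ∑ a, (A *ᵥ v) a = ∑ a, v a := by
  rw [← one_dotProduct, dotProduct_mulVec, h, one_dotProduct]

variable [DecidableEq α]

theorem vecMul_list_prod_eq_self [Semiring R] {u : α → R} {L : List (Matrix α α R)}
    (h : ∀ A ∈ L, u ᵥ* A = u) : u ᵥ* L.prod = u := by
  induction L with
  | nil => exact vecMul_one u
  | cons A L ih =>
    rw [List.prod_cons, ← vecMul_vecMul, h A List.mem_cons_self,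
      ih fun B hB => h B (List.mem_cons_of_mem A hB)]

variable (R) [Field R]

/-- `Mᵢ = I + (1/n) (𝟙 - n eᵢ) eᵢᵀ` with `n = card α`: applied to a vector, it spreads the
`i`-th coordinate evenly over all coordinates. -/
noncomputable def spreadMatrix (i : α) : Matrix α α R :=
  1 + (Fintype.card α : R)⁻¹ •
    vecMulVec (1 - (Fintype.card α : R) • Pi.single i 1) (Pi.single i 1)

variable {R}

theorem one_vecMul_spreadMatrix (i : α) : 1 ᵥ* spreadMatrix R i = 1 := by
  simp [spreadMatrix, vecMul_add, vecMul_smul, vecMul_vecMulVec, dotProduct_sub]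

theorem spreadMatrix_perm_apply (σ : Perm α) (i : α) :
    spreadMatrix R (σ i) = reindex σ σ (spreadMatrix R i) := by
  ext a b
  simp [spreadMatrix, one_apply, vecMulVec_apply, Pi.single_apply, symm_apply_eq]

theorem prod_ofFn_spreadMatrix_perm {m : ℕ} (σ : Perm α) (f : Fin m → α) :
    (List.ofFn fun k => spreadMatrix R (σ (f k))).prod =
      reindex σ σ (List.ofFn fun k => spreadMatrix R (f k)).prod := by
  rw [← coe_reindexAlgEquiv R R σ, map_list_prod, List.map_ofFn]
  simp only [Function.comp_def, coe_reindexAlgEquiv, spreadMatrix_perm_apply]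

end Matrix

theorem expected_permuted_product_ones_general
    (n : ℕ) :
    ((n.factorial : ℝ))⁻¹ •
        ∑ τ : Equiv.Perm (Fin n),
          ((List.ofFn (fun k : Fin n =>
              (1 : Matrix (Fin n) (Fin n) ℝ) +
                (n : ℝ)⁻¹ • Matrix.vecMulVec
                  ((fun _ => (1 : ℝ)) - (n : ℝ) • (Pi.single (τ k) 1 : Fin n → ℝ))
                  (Pi.single (τ k) 1))).prod).mulVec (fun _ => (1 : ℝ))
      = fun _ => (1 : ℝ) := by
  have hM : ∀ i : Fin n, (1 : Matrix (Fin n) (Fin n) ℝ) + (n : ℝ)⁻¹ • vecMulVec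
      ((fun _ => (1 : ℝ)) - (n : ℝ) • (Pi.single i 1 : Fin n → ℝ)) (Pi.single i 1) =
      spreadMatrix ℝ i := by
    intro i; simp only [spreadMatrix, Fintype.card_fin]; rfl
  simp only [hM]
  show (n.factorial : ℝ)⁻¹ • ∑ τ : Perm (Fin n),
    (List.ofFn fun k => spreadMatrix ℝ (τ k)).prod *ᵥ 1 = 1
  set w := (List.ofFn fun k : Fin n => spreadMatrix ℝ k).prod *ᵥ 1 with hw
  have hperm : ∀ τ : Perm (Fin n),
      (List.ofFn fun k => spreadMatrix ℝ (τ k)).prod *ᵥ 1 = fun i => w (τ.symm i) := by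
    intro τ
    rw [prod_ofFn_spreadMatrix_perm τ fun k => k, reindex_apply, submatrix_mulVec_equiv]
    rfl
  have hsum : ∑ a, w a = n := by
    rw [hw, sum_mulVec_of_one_vecMul]
    · simp
    · exact vecMul_list_prod_eq_self (by simp [one_vecMul_spreadMatrix])
  funext i
  have hn : (n : ℝ) ≠ 0 := Nat.cast_ne_zero.mpr i.pos.ne'
  have hinv : ∑ τ : Perm (Fin n), w (τ.symm i) = ∑ τ : Perm (Fin n), w (τ i) :=
    Equiv.sum_comp (Equiv.inv (Perm (Fin n))) fun τ => w (τ i)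
  simp only [Pi.smul_apply, Finset.sum_apply, hperm, smul_eq_mul, Pi.one_apply]
  have hmean := Perm.factorial_inv_mul_sum_apply w i
  rw [Fintype.card_fin, hsum, inv_mul_cancel₀ hn] at hmean
  rw [hinv, hmean]

theorem expected_permuted_product_ones
    (n : ℕ) (hn : 1 ≤ n) :
    ((n.factorial : ℝ))⁻¹ •
        ∑ τ : Equiv.Perm (Fin n),
          ((List.ofFn (fun k : Fin n =>
              (1 : Matrix (Fin n) (Fin n) ℝ) +
                (n : ℝ)⁻¹ • Matrix.vecMulVec
                  ((fun _ => (1 : ℝ)) - (n : ℝ) • (Pi.single (τ k) 1 : Fin n → ℝ))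
                  (Pi.single (τ k) 1))).prod).mulVec (fun _ => (1 : ℝ))
      = fun _ => (1 : ℝ) :=
  expected_permuted_product_ones_general n
end
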